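/- arXiv:1803.02911 — 2 statements merged into one kernel-verified Lean document; each statement's English description precedes it below -/
import Mathlib

section
/- For a measurable Banach bundle T over X, the dual module Γ(T)* of L^0(m)-linear continuous maps Γ(T) → L^0(m), with pointwise dual norm, is isometrically isomorphic as an L^0(m)-normed L^0(m)-module to Γ(T*), the section module of the dual bundle whose fiber norm at x is the dual norm of n(x,·). -/
/-! Fiberwise this is finite-dimensional duality for the norm `nrm n x` on `ℝⁿ`. A norm on `ℝⁿ`
is continuous and bounded below by a multiple of the sup norm, so its dual norm is finite and is
the least `a` with `|v ⬝ᵥ w| ≤ a * nrm n x w`; checking this for rational `w` only, countably many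
test sections control the dual norm a.e. Conversely an `L⁰`-linear `T` is determined on `E n` by
its values on the `n` constant basis sections, since there every section is an `L⁰`-combination of
them with its coordinates as coefficients; these values are the coordinates of the representing
section of `T*`. -/

open MeasureTheory Filter

namespace L0SerreSwan

/-- A measurable Banach bundle over `(X,d,m)`: a Borel partition `(E_n)_{n∈ℕ}` of `X`,
with total space `⊔ₙ Eₙ × ℝⁿ`, together with a measurable function `nrm` assigning to
`m`-a.e. point `x ∈ E_n` a norm `nrm n x ·` on the fiber `ℝⁿ`. -/
structure MBB (X : Type*) [MeasurableSpace X] (μ : MeasureTheory.Measure X) where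
  E : ℕ → Set X
  measE : ∀ n, MeasurableSet (E n)
  disjE : ∀ n m, n ≠ m → Disjoint (E n) (E m)
  unionE : (⋃ n, E n) = Set.univ
  nrm : (n : ℕ) → X → (Fin n → ℝ) → ℝ
  meas_nrm : ∀ n, Measurable (fun p : X × (Fin n → ℝ) => nrm n p.1 p.2)
  nrm_nonneg : ∀ n, ∀ᵐ x ∂μ, x ∈ E n → ∀ v, 0 ≤ nrm n x v
  nrm_definite : ∀ n, ∀ᵐ x ∂μ, x ∈ E n → ∀ v, nrm n x v = 0 → v = 0
  nrm_smul : ∀ n, ∀ᵐ x ∂μ, x ∈ E n → ∀ (c : ℝ) (v), nrm n x (c • v) = |c| * nrm n x v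
  nrm_triangle : ∀ n, ∀ᵐ x ∂μ, x ∈ E n → ∀ v w, nrm n x (v + w) ≤ nrm n x v + nrm n x w

variable {X : Type*} [MeasurableSpace X] {μ : MeasureTheory.Measure X}

/-- A measurable section of a measurable Banach bundle, recorded by its values
`val n x ∈ ℝⁿ` (only the values for `x ∈ E_n` are relevant). -/
structure Sec (B : MBB X μ) where
  val : (n : ℕ) → X → Fin n → ℝ
  meas : ∀ n, Measurable (val n)

/-- Two sections agree `m`-a.e. (fiberwise, on each piece of the partition). -/
def Sec.aeeq (B : MBB X μ) (s t : Sec B) : Prop :=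
  ∀ n, ∀ᵐ x ∂μ, x ∈ B.E n → s.val n x = t.val n x

/-- Pointwise sum of sections. -/
def Sec.add {B : MBB X μ} (s t : Sec B) : Sec B :=
  ⟨fun n x i => s.val n x i + t.val n x i, fun n =>
    measurable_pi_lambda _ fun i =>
      ((measurable_pi_apply i).comp (s.meas n)).add
        ((measurable_pi_apply i).comp (t.meas n))⟩

/-- Pointwise difference of sections. -/
def Sec.sub {B : MBB X μ} (s t : Sec B) : Sec B :=
  ⟨fun n x i => s.val n x i - t.val n x i, fun n =>
    measurable_pi_lambda _ fun i =>
      ((measurable_pi_apply i).comp (s.meas n)).sub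
        ((measurable_pi_apply i).comp (t.meas n))⟩

/-- Multiplication of a section by a (Borel representative of an) `L⁰` function. -/
def Sec.smul {B : MBB X μ} (g : X → ℝ) (hg : Measurable g) (s : Sec B) : Sec B :=
  ⟨fun n x i => g x * s.val n x i, fun n =>
    measurable_pi_lambda _ fun i =>
      hg.mul ((measurable_pi_apply i).comp (s.meas n))⟩

/-- The pointwise norm `|s|(x) = nrm(s(x))` of a section. -/
noncomputable def ptNorm (B : MBB X μ) (s : Sec B) : X → ℝ :=
  fun x => ∑' n, (B.E n).indicator (fun y => B.nrm n y (s.val n y)) x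

/-- The distance `d(s,t) = ∫ |s-t| ∧ 1 dm'` on sections. -/
noncomputable def secDist (B : MBB X μ) (m' : MeasureTheory.Measure X) (s t : Sec B) : ℝ :=
  ∫ x, min (ptNorm B (s.sub t) x) 1 ∂m'

/-- The constant section associated to a vector `q ∈ ℝⁿ`: it equals `q` on `E_n` and
vanishes on the other pieces of the partition. -/
def constSec (B : MBB X μ) (n : ℕ) (q : Fin n → ℝ) : Sec B :=
  ⟨fun k _x i => if h : k = n then q (Fin.cast h i) else 0,
   fun _k => measurable_const⟩

/-- A finite `L⁰`-linear combination `∑ᵢ gᵢ • uᵢ` of sections. -/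
def lincomb {B : MBB X μ} {k : ℕ} (g : Fin k → X → ℝ) (hg : ∀ i, Measurable (g i))
    (u : Fin k → Sec B) : Sec B :=
  ⟨fun n x j => ∑ i, g i x * (u i).val n x j, fun n =>
    measurable_pi_lambda _ fun j =>
      Finset.measurable_sum _ fun i _ =>
        (hg i).mul ((measurable_pi_apply j).comp ((u i).meas n))⟩

/-- The dual norm of the fiber norm `nrm n x ·`: the supremum of `|v·w|` over the unit
ball `{w : nrm n x w ≤ 1}`. -/
noncomputable def dualNrm (B : MBB X μ) (n : ℕ) (x : X) (v : Fin n → ℝ) : ℝ :=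
  sSup {r : ℝ | ∃ w : Fin n → ℝ, B.nrm n x w ≤ 1 ∧ r = |∑ i, v i * w i|}

/-- The duality pairing `⟨s*, s⟩(x) = s*(x) · s(x)` between two sections. -/
noncomputable def pairing (B : MBB X μ) (sd s : Sec B) : X → ℝ :=
  fun x => ∑' n, (B.E n).indicator (fun y => ∑ i, sd.val n y i * s.val n y i) x

/-- The pointwise dual norm of a section, computed in the dual bundle `T*`. -/
noncomputable def dualPtNorm (B : MBB X μ) (sd : Sec B) : X → ℝ :=
  fun x => ∑' n, (B.E n).indicator (fun y => dualNrm B n y (sd.val n y)) x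

section DualNorm

variable {E : Type*} [NormedAddCommGroup E] [NormedSpace ℝ E] [FiniteDimensional ℝ E]

theorem _root_.Seminorm.continuous_of_finiteDimensional (p : Seminorm ℝ E) : Continuous p :=
  continuousOn_univ.mp (p.convexOn.continuousOn isOpen_univ)

/-- `c` is the minimum of `p` on the compact unit sphere. -/
theorem _root_.Seminorm.exists_pos_mul_norm_le (p : Seminorm ℝ E) (hp : ∀ v, p v = 0 → v = 0) :
    ∃ c > 0, ∀ v, c * ‖v‖ ≤ p v := by
  rcases subsingleton_or_nontrivial E with hE | hE
  · exact ⟨1, one_pos, fun v => by simp [Subsingleton.elim v 0]⟩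
  obtain ⟨u, hu, hmin⟩ := (isCompact_sphere (0 : E) 1).exists_isMinOn
    (NormedSpace.sphere_nonempty.mpr zero_le_one) p.continuous_of_finiteDimensional.continuousOn
  have hu0 : u ≠ 0 := ne_zero_of_mem_unit_sphere ⟨u, hu⟩
  refine ⟨p u, (apply_nonneg p u).lt_of_ne' fun h => hu0 (hp u h), fun v => ?_⟩
  rcases eq_or_ne v 0 with rfl | hv
  · simp
  have hv' : ‖v‖ ≠ 0 := norm_ne_zero_iff.mpr hv
  have hsphere : ‖v‖⁻¹ • v ∈ Metric.sphere (0 : E) 1 := by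
    simp [norm_smul, hv']
  calc p u * ‖v‖ ≤ p (‖v‖⁻¹ • v) * ‖v‖ := by gcongr; exact hmin hsphere
    _ = p v := by rw [map_smul_eq_mul, norm_inv, norm_norm]; field_simp

end DualNorm

section FiberDualNorm

variable {n : ℕ}

/-- The `sSup` is a junk `0` when the set is unbounded, which a norm `p` excludes. -/
noncomputable def fiberDualNorm (p : Seminorm ℝ (Fin n → ℝ)) (v : Fin n → ℝ) : ℝ :=
  sSup {r : ℝ | ∃ w : Fin n → ℝ, p w ≤ 1 ∧ r = |v ⬝ᵥ w|}

variable {p : Seminorm ℝ (Fin n → ℝ)}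

theorem bddAbove_abs_dotProduct_of_le_one (hp : ∀ v, p v = 0 → v = 0) (v : Fin n → ℝ) :
    BddAbove {r : ℝ | ∃ w : Fin n → ℝ, p w ≤ 1 ∧ r = |v ⬝ᵥ w|} := by
  obtain ⟨c, hc, hlow⟩ := p.exists_pos_mul_norm_le hp
  refine ⟨(∑ i, |v i|) * (1 / c), ?_⟩
  rintro _ ⟨w, hw, rfl⟩
  have hw' : ‖w‖ ≤ 1 / c := (le_div_iff₀' hc).mpr ((hlow w).trans hw)
  calc |v ⬝ᵥ w| ≤ ∑ i, |v i| * |w i| :=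
        (Finset.abs_sum_le_sum_abs _ _).trans_eq (by simp only [abs_mul])
    _ ≤ ∑ i, |v i| * (1 / c) := by
        gcongr with i
        exact (norm_le_pi_norm w i).trans hw'
    _ = (∑ i, |v i|) * (1 / c) := (Finset.sum_mul ..).symm

theorem abs_dotProduct_le_fiberDualNorm_mul (hp : ∀ v, p v = 0 → v = 0) (v w : Fin n → ℝ) :
    |v ⬝ᵥ w| ≤ fiberDualNorm p v * p w := by
  rcases (apply_nonneg p w).eq_or_lt with h0 | hpos
  · simp [hp w h0.symm]
  have hmem : |v ⬝ᵥ ((p w)⁻¹ • w)| ∈ {r : ℝ | ∃ w : Fin n → ℝ, p w ≤ 1 ∧ r = |v ⬝ᵥ w|} :=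
    ⟨_, by rw [map_smul_eq_mul, Real.norm_eq_abs, abs_inv, abs_of_pos hpos,
      inv_mul_cancel₀ hpos.ne'], rfl⟩
  have hle := le_csSup (bddAbove_abs_dotProduct_of_le_one hp v) hmem
  rwa [dotProduct_smul, smul_eq_mul, abs_mul, abs_inv, abs_of_pos hpos,
    inv_mul_le_iff₀ hpos, mul_comm] at hle

theorem fiberDualNorm_le {v : Fin n → ℝ} {a : ℝ} (ha : 0 ≤ a)
    (h : ∀ w, |v ⬝ᵥ w| ≤ a * p w) : fiberDualNorm p v ≤ a := by
  refine Real.sSup_le ?_ ha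
  rintro _ ⟨w, hw, rfl⟩
  exact (h w).trans (mul_le_of_le_one_right ha hw)

theorem abs_dotProduct_le_of_forall_rat {v : Fin n → ℝ} {a : ℝ}
    (h : ∀ q : Fin n → ℚ, |v ⬝ᵥ (fun i => (q i : ℝ))| ≤ a * p (fun i => (q i : ℝ)))
    (w : Fin n → ℝ) : |v ⬝ᵥ w| ≤ a * p w :=
  (DenseRange.piMap fun _ => Rat.denseRange_cast).induction_on w
    (isClosed_le (continuous_const.dotProduct continuous_id).abs
      (continuous_const.mul p.continuous_of_finiteDimensional)) h

end FiberDualNorm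

namespace MBB

variable {B : MBB X μ} {x : X} {n : ℕ}

theorem exists_mem (B : MBB X μ) (x : X) : ∃ n, x ∈ B.E n :=
  Set.mem_iUnion.mp (Set.eq_univ_iff_forall.mp B.unionE x)

theorem notMem_of_mem {k : ℕ} (hx : x ∈ B.E n) (hk : k ≠ n) : x ∉ B.E k :=
  fun hxk => Set.disjoint_left.mp (B.disjE k n hk) hxk hx

theorem tsum_indicator_eq (f : (k : ℕ) → X → ℝ) (hx : x ∈ B.E n) :
    ∑' k, (B.E k).indicator (f k) x = f n x := by
  rw [tsum_eq_single n fun k hk => Set.indicator_of_notMem (notMem_of_mem hx hk) _]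
  exact Set.indicator_of_mem hx _

theorem ae_exists_seminorm (B : MBB X μ) : ∀ᵐ x ∂μ, ∀ n, x ∈ B.E n →
    ∃ p : Seminorm ℝ (Fin n → ℝ), ⇑p = B.nrm n x ∧ ∀ v, p v = 0 → v = 0 := by
  refine ae_all_iff.mpr fun n => ?_
  filter_upwards [B.nrm_smul n, B.nrm_triangle n, B.nrm_definite n] with x hsmul hadd hdef hx
  exact ⟨Seminorm.of (B.nrm n x) (hadd hx) (hsmul hx), rfl, hdef hx⟩

end MBB

variable {B : MBB X μ} {x : X} {n : ℕ}

theorem pairing_eq (sd s : Sec B) (hx : x ∈ B.E n) :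
    pairing B sd s x = sd.val n x ⬝ᵥ s.val n x :=
  MBB.tsum_indicator_eq _ hx

theorem ptNorm_eq {p : Seminorm ℝ (Fin n → ℝ)} (s : Sec B) (hx : x ∈ B.E n)
    (hp : ⇑p = B.nrm n x) : ptNorm B s x = p (s.val n x) := by
  rw [hp]
  exact MBB.tsum_indicator_eq _ hx

theorem dualPtNorm_eq {p : Seminorm ℝ (Fin n → ℝ)} (sd : Sec B) (hx : x ∈ B.E n)
    (hp : ⇑p = B.nrm n x) : dualPtNorm B sd x = fiberDualNorm p (sd.val n x) := by
  rw [fiberDualNorm, hp]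
  exact MBB.tsum_indicator_eq _ hx

theorem constSec_val_self (n : ℕ) (q : Fin n → ℝ) (x : X) : (constSec B n q).val n x = q := by
  funext i
  simp [constSec]

theorem pairing_constSec_single (sd : Sec B) (hx : x ∈ B.E n) (i : Fin n) :
    pairing B sd (constSec B n (Pi.single i 1)) x = sd.val n x i := by
  rw [pairing_eq _ _ hx, constSec_val_self, dotProduct_single, mul_one]

theorem ae_abs_pairing_le (sd s : Sec B) :
    ∀ᵐ x ∂μ, |pairing B sd s x| ≤ dualPtNorm B sd x * ptNorm B s x := by
  filter_upwards [B.ae_exists_seminorm] with x hnorm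
  obtain ⟨n, hn⟩ := B.exists_mem x
  obtain ⟨p, hp, hdef⟩ := hnorm n hn
  rw [pairing_eq _ _ hn, dualPtNorm_eq _ hn hp, ptNorm_eq _ hn hp]
  exact abs_dotProduct_le_fiberDualNorm_mul hdef _ _

/-- Testing against the countably many sections with constant rational coordinates suffices. -/
theorem ae_dualPtNorm_le {sd : Sec B} {g : X → ℝ} (hg : ∀ᵐ x ∂μ, 0 ≤ g x)
    (h : ∀ s : Sec B, ∀ᵐ x ∂μ, |pairing B sd s x| ≤ g x * ptNorm B s x) :
    ∀ᵐ x ∂μ, dualPtNorm B sd x ≤ g x := by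
  have hrat : ∀ᵐ x ∂μ, ∀ n (q : Fin n → ℚ),
      |pairing B sd (constSec B n fun i => (q i : ℝ)) x| ≤
        g x * ptNorm B (constSec B n fun i => (q i : ℝ)) x :=
    ae_all_iff.mpr fun n => ae_all_iff.mpr fun q => h _
  filter_upwards [B.ae_exists_seminorm, hrat, hg] with x hnorm hq hgx
  obtain ⟨n, hn⟩ := B.exists_mem x
  obtain ⟨p, hp, -⟩ := hnorm n hn
  rw [dualPtNorm_eq _ hn hp]
  refine fiberDualNorm_le hgx (abs_dotProduct_le_of_forall_rat fun q => ?_)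
  simpa only [pairing_eq _ _ hn, ptNorm_eq _ hn hp, constSec_val_self] using hq n q

theorem Sec.aeeq_of_pairing_ae_eq {sd td : Sec B}
    (h : ∀ s : Sec B, pairing B sd s =ᵐ[μ] pairing B td s) : Sec.aeeq B sd td := by
  intro n
  filter_upwards [ae_all_iff.mpr fun i : Fin n => h (constSec B n (Pi.single i 1))] with x hx hxE
  funext i
  simpa only [pairing_constSec_single _ hxE] using hx i

structure IsL0Linear (T : Sec B → X → ℝ) : Prop where
  congr_aeeq : ∀ s t : Sec B, Sec.aeeq B s t → T s =ᵐ[μ] T t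
  map_add : ∀ s t : Sec B, T (Sec.add s t) =ᵐ[μ] fun x => T s x + T t x
  map_smul : ∀ (g : X → ℝ) (hg : Measurable g) (s : Sec B),
    T (Sec.smul g hg s) =ᵐ[μ] fun x => g x * T s x

namespace IsL0Linear

variable {T : Sec B → X → ℝ}

theorem map_lincomb (hT : IsL0Linear T) {k : ℕ} (g : Fin k → X → ℝ) (hg : ∀ i, Measurable (g i))
    (u : Fin k → Sec B) : T (lincomb g hg u) =ᵐ[μ] fun x => ∑ i, g i x * T (u i) x := by
  induction k with
  | zero =>
    have hzero : Sec.aeeq B (lincomb g hg u) (Sec.smul 0 measurable_const (lincomb g hg u)) :=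
      fun _ => ae_of_all _ fun _ _ => funext fun _ => by simp [lincomb, Sec.smul]
    filter_upwards [hT.congr_aeeq _ _ hzero, hT.map_smul 0 measurable_const (lincomb g hg u)]
      with x h_eq h_smul
    rw [h_eq, h_smul, Pi.zero_apply, zero_mul, Fin.sum_univ_zero]
  | succ k ih =>
    set head := Sec.smul (g 0) (hg 0) (u 0)
    set tail := lincomb (fun i => g i.succ) (fun i => hg i.succ) (fun i => u i.succ)
    have hsplit : Sec.aeeq B (lincomb g hg u) (Sec.add head tail) :=
      fun _ => ae_of_all _ fun _ _ => funext fun _ => by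
        simp [lincomb, Sec.add, Sec.smul, head, tail, Fin.sum_univ_succ]
    filter_upwards [hT.congr_aeeq _ _ hsplit, hT.map_add head tail, hT.map_smul (g 0) (hg 0) (u 0),
      ih (fun i => g i.succ) (fun i => hg i.succ) (fun i => u i.succ)] with x h_eq h_add h_head h_tail
    rw [h_eq, h_add, h_head, h_tail, Fin.sum_univ_succ]

end IsL0Linear

theorem Sec.aeeq_smul_indicator_lincomb (s : Sec B) (n : ℕ)
    (hχ : Measurable ((B.E n).indicator 1 : X → ℝ)) (hs : ∀ i, Measurable fun x => s.val n x i) :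
    Sec.aeeq B (Sec.smul ((B.E n).indicator 1) hχ s)
      (lincomb (fun i x => s.val n x i) hs fun i => constSec B n (Pi.single i 1)) := by
  intro k
  refine ae_of_all _ fun x hx => funext fun j => ?_
  by_cases hk : k = n
  · subst hk
    simp [Sec.smul, lincomb, constSec, Set.indicator_of_mem hx, Pi.single_apply, mul_ite]
  · simp [Sec.smul, lincomb, constSec, MBB.notMem_of_mem hx (Ne.symm hk), hk]

def representingSec (T : Sec B → X → ℝ) (hT : ∀ s, Measurable (T s)) : Sec B :=
  ⟨fun n x i => T (constSec B n (Pi.single i 1)) x,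
    fun _ => measurable_pi_lambda _ fun _ => hT _⟩

theorem IsL0Linear.ae_eq_pairing {T : Sec B → X → ℝ} (hT : IsL0Linear T)
    (hmeas : ∀ s, Measurable (T s)) (s : Sec B) :
    T s =ᵐ[μ] pairing B (representingSec T hmeas) s := by
  have hpiece : ∀ n, ∀ᵐ x ∂μ, x ∈ B.E n →
      T s x = (representingSec T hmeas).val n x ⬝ᵥ s.val n x := by
    intro n
    have hχ : Measurable ((B.E n).indicator 1 : X → ℝ) :=
      measurable_const.indicator (B.measE n)
    have hs : ∀ i, Measurable fun x => s.val n x i :=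
      fun i => (measurable_pi_apply i).comp (s.meas n)
    filter_upwards [hT.congr_aeeq _ _ (Sec.aeeq_smul_indicator_lincomb s n hχ hs),
      hT.map_smul _ hχ s, hT.map_lincomb _ hs _] with x h_eq h_smul h_lin hx
    rw [h_smul, h_lin, Set.indicator_of_mem hx, Pi.one_apply, one_mul] at h_eq
    rw [h_eq, dotProduct_comm]
    rfl
  filter_upwards [ae_all_iff.mpr hpiece] with x hx
  obtain ⟨n, hn⟩ := B.exists_mem x
  rw [pairing_eq _ _ hn]
  exact hx n hn

theorem dual_module_eq_sections_of_dual_bundle_general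
    {X : Type*}
    [MeasurableSpace X]
    (μ : Measure X)
    (m' : Measure X)
    (B : MBB X μ) :
    -- the pairing with `s*` is a module morphism with pointwise norm `dualPtNorm s*` …
    (∀ sd s : Sec B, ∀ᵐ x ∂μ, |pairing B sd s x| ≤ dualPtNorm B sd x * ptNorm B s x) ∧
    (∀ sd : Sec B, ∀ g : X → ℝ, Measurable g → (∀ᵐ x ∂μ, 0 ≤ g x) →
      (∀ s : Sec B, ∀ᵐ x ∂μ, |pairing B sd s x| ≤ g x * ptNorm B s x) →
      ∀ᵐ x ∂μ, dualPtNorm B sd x ≤ g x) ∧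
    -- … it is injective on a.e.-classes …
    (∀ sd td : Sec B,
      (∀ s : Sec B, pairing B sd s =ᵐ[μ] pairing B td s) → Sec.aeeq B sd td) ∧
    -- … and every `L⁰(m)`-linear continuous functional is such a pairing.
    (∀ T : Sec B → X → ℝ,
      (∀ s, Measurable (T s)) →
      (∀ s t : Sec B, Sec.aeeq B s t → T s =ᵐ[μ] T t) →
      (∀ s t : Sec B, T (Sec.add s t) =ᵐ[μ] fun x => T s x + T t x) →
      (∀ (g : X → ℝ) (hg : Measurable g) (s : Sec B),
        T (Sec.smul g hg s) =ᵐ[μ] fun x => g x * T s x) →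
      (∀ (u : ℕ → Sec B) (s : Sec B),
        Tendsto (fun k => secDist B m' (u k) s) atTop (nhds 0) →
        TendstoInMeasure m' (fun k => T (u k)) atTop (T s)) →
      ∃ sd : Sec B, ∀ s : Sec B, T s =ᵐ[μ] pairing B sd s) := by
  refine ⟨ae_abs_pairing_le, fun _ _ _ hg h => ae_dualPtNorm_le hg h,
    fun _ _ => Sec.aeeq_of_pairing_ae_eq, ?_⟩
  intro T hmeas hcongr hadd hsmul _
  exact ⟨representingSec T hmeas, (IsL0Linear.mk hcongr hadd hsmul).ae_eq_pairing hmeas⟩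

/-- **Duality: `Γ(T)* = Γ(T*)`.** For a measurable Banach bundle `T` over a metric
measure space `(X,d,m)`, the dual module of `Γ(T)` (the `L⁰(m)`-linear continuous maps
`Γ(T) → L⁰(m)` with the pointwise dual norm) is isometrically isomorphic, via the
duality pairing, to the section module `Γ(T*)` of the dual bundle: the pairing with a
section `s*` of `T*` is pointwise bounded by `|s*|_* |s|` with `|s*|_*` the least such
bound (isometry), the pairing is injective on a.e.-classes, and every `L⁰(m)`-linear
continuous functional on sections is of this form (surjectivity). -/
theorem dual_module_eq_sections_of_dual_bundle
    {X : Type*} [MetricSpace X] [CompleteSpace X] [SecondCountableTopology X]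
    [MeasurableSpace X] [BorelSpace X]
    (μ : Measure X) [IsLocallyFiniteMeasure μ] (hμ : μ ≠ 0)
    (m' : Measure X) [IsProbabilityMeasure m'] (h₁ : μ ≪ m') (h₂ : m' ≪ μ)
    (B : MBB X μ) :
    -- the pairing with `s*` is a module morphism with pointwise norm `dualPtNorm s*` …
    (∀ sd s : Sec B, ∀ᵐ x ∂μ, |pairing B sd s x| ≤ dualPtNorm B sd x * ptNorm B s x) ∧
    (∀ sd : Sec B, ∀ g : X → ℝ, Measurable g → (∀ᵐ x ∂μ, 0 ≤ g x) →
      (∀ s : Sec B, ∀ᵐ x ∂μ, |pairing B sd s x| ≤ g x * ptNorm B s x) →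
      ∀ᵐ x ∂μ, dualPtNorm B sd x ≤ g x) ∧
    -- … it is injective on a.e.-classes …
    (∀ sd td : Sec B,
      (∀ s : Sec B, pairing B sd s =ᵐ[μ] pairing B td s) → Sec.aeeq B sd td) ∧
    -- … and every `L⁰(m)`-linear continuous functional is such a pairing.
    (∀ T : Sec B → X → ℝ,
      (∀ s, Measurable (T s)) →
      (∀ s t : Sec B, Sec.aeeq B s t → T s =ᵐ[μ] T t) →
      (∀ s t : Sec B, T (Sec.add s t) =ᵐ[μ] fun x => T s x + T t x) →
      (∀ (g : X → ℝ) (hg : Measurable g) (s : Sec B),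
        T (Sec.smul g hg s) =ᵐ[μ] fun x => g x * T s x) →
      (∀ (u : ℕ → Sec B) (s : Sec B),
        Tendsto (fun k => secDist B m' (u k) s) atTop (nhds 0) →
        TendstoInMeasure m' (fun k => T (u k)) atTop (T s)) →
      ∃ sd : Sec B, ∀ s : Sec B, T s =ᵐ[μ] pairing B sd s) :=
  dual_module_eq_sections_of_dual_bundle_general μ m' B

end L0SerreSwan
end

section
/- For measurable Hilbert bundles T_1, T_2 over X, the tensor product of Hilbert section modules equals the sections of the tensor bundle: Γ(T_1) ⊗ Γ(T_2) is isometrically isomorphic to Γ(T_1 ⊗ T_2); in particular, the dimensional decomposition (E_k) of Γ(T_1)⊗Γ(T_2) is given by E_k = ∪_{nm=k} (E_n^1 ∩ E_m^2), and the pointwise norm satisfies |s^1 ⊗ s^2| = |s^1||s^2| m-a.e. -/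
/-!
Over `E¹ₙ ∩ E²ₘ` an elementary tensor `s¹ ⊗ s²` has the coordinates `s¹ᵢ s²ⱼ` in `ℝ^(n·m)`, and
the tensor norm factorizes on such vectors, which is the pointwise isometry. For density, on
`E¹ₙ ∩ E²ₘ` every section `t` equals `∑ᵢⱼ tᵢⱼ eᵢ ⊗ eⱼ`, with `eᵢ`, `eⱼ` the constant sections of the
standard bases. Truncating to `n, m < N` gives a finite `L⁰`-combination of elementary tensors that
agrees with `t` outside a set whose `m'`-measure tends to `0` as `N → ∞`, and `∫ |t - s| ∧ 1 dm'`
is at most the measure of the set where `s` and `t` differ.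
-/


open MeasureTheory Filter

namespace L0SerreSwan

variable {X : Type*} [MeasurableSpace X] {μ : MeasureTheory.Measure X}

/-- The elementary tensor `s₁ ⊗ s₂` of sections of two bundles `B₁`, `B₂`, as a section
of a tensor bundle `B`: over a point of `E¹_n ∩ E²_m` (contained in the piece of `B` of
fiber dimension `n·m`) its coordinates are the products of the coordinates of `s₁` and
`s₂`, via the identification `ℝ^(n·m) ≃ ℝⁿ ⊗ ℝᵐ`. -/
noncomputable def tensSec (B₁ B₂ B : MBB X μ) (s₁ : Sec B₁) (s₂ : Sec B₂) : Sec B :=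
  ⟨fun k x p =>
    ∑ n ∈ Finset.range (k + 1), ∑ m ∈ Finset.range (k + 1),
      if h : n * m = k then
        (B₁.E n ∩ B₂.E m).indicator
          (fun y =>
            s₁.val n y (finProdFinEquiv.symm (Fin.cast h.symm p)).1 *
              s₂.val m y (finProdFinEquiv.symm (Fin.cast h.symm p)).2) x
      else 0,
   fun k => measurable_pi_lambda _ fun p => by
    apply Finset.measurable_sum; intro n _
    apply Finset.measurable_sum; intro m _
    split_ifs with h
    · exact Measurable.indicator
        (((measurable_pi_apply _).comp (s₁.meas n)).mul
          ((measurable_pi_apply _).comp (s₂.meas m)))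
        ((B₁.measE n).inter (B₂.measE m))
    · exact measurable_const⟩

open scoped Topology

namespace MBB

variable (B : MBB X μ)

lemma eq_of_mem_E {x : X} {n m : ℕ} (hn : x ∈ B.E n) (hm : x ∈ B.E m) : n = m := by
  by_contra h
  exact Set.disjoint_left.mp (B.disjE n m h) hn hm

lemma exists_mem_E (x : X) : ∃ n, x ∈ B.E n :=
  Set.mem_iUnion.mp (B.unionE ▸ Set.mem_univ x)

lemma ae_nrm_zero (n : ℕ) : ∀ᵐ x ∂μ, x ∈ B.E n → B.nrm n x 0 = 0 := by
  filter_upwards [B.nrm_smul n] with x h hx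
  simpa using h hx 0 0

end MBB

lemma ptNorm_eq_nrm_of_mem (B : MBB X μ) (s : Sec B) {x : X} {n : ℕ} (hx : x ∈ B.E n) :
    ptNorm B s x = B.nrm n x (s.val n x) := by
  rw [ptNorm, tsum_eq_single n fun k hk =>
    Set.indicator_of_notMem (fun hxk => hk (B.eq_of_mem_E hxk hx)) _]
  exact Set.indicator_of_mem hx _

lemma ae_ptNorm_nonneg (B : MBB X μ) (s : Sec B) : ∀ᵐ x ∂μ, 0 ≤ ptNorm B s x := by
  filter_upwards [ae_all_iff.2 B.nrm_nonneg] with x hx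
  refine tsum_nonneg fun k => ?_
  by_cases h : x ∈ B.E k
  · rw [Set.indicator_of_mem h]
    exact hx k h _
  · rw [Set.indicator_of_notMem h]

lemma ae_ptNorm_eq_zero_of_val_eq (B : MBB X μ) (s t : Sec B) :
    ∀ᵐ x ∂μ, (∀ n, x ∈ B.E n → s.val n x = t.val n x) → ptNorm B (s.sub t) x = 0 := by
  filter_upwards [ae_all_iff.2 B.ae_nrm_zero] with x hzero hst
  obtain ⟨n, hn⟩ := B.exists_mem_E x
  have hdiff : (s.sub t).val n x = 0 := funext fun i => sub_eq_zero.2 (congrFun (hst n hn) i)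
  rw [ptNorm_eq_nrm_of_mem B _ hn, hdiff, hzero n hn]

lemma secDist_le_measureReal_compl (B : MBB X μ) {m' : Measure X} [IsFiniteMeasure m']
    (hm' : m' ≪ μ) (s t : Sec B) {S : Set X} (hS : MeasurableSet S)
    (hst : ∀ᵐ x ∂μ, x ∈ S → ∀ n, x ∈ B.E n → s.val n x = t.val n x) :
    secDist B m' s t ≤ m'.real Sᶜ := by
  have hae := hm'.ae_le (hst.and ((ae_ptNorm_eq_zero_of_val_eq B s t).and
    (ae_ptNorm_nonneg B (s.sub t))))
  have hnonneg : 0 ≤ᵐ[m'] fun x => min (ptNorm B (s.sub t) x) 1 := by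
    filter_upwards [hae] with x hx
    exact le_min hx.2.2 zero_le_one
  have hle : (fun x => min (ptNorm B (s.sub t) x) 1) ≤ᵐ[m'] Sᶜ.indicator fun _ => (1 : ℝ) := by
    filter_upwards [hae] with x hx
    obtain ⟨hstx, hzero, -⟩ := hx
    by_cases hxS : x ∈ S
    · rw [hzero (hstx hxS), Set.indicator_of_notMem (Set.notMem_compl_iff.2 hxS), min_eq_left
        zero_le_one]
    · rw [Set.indicator_of_mem hxS]
      exact min_le_right _ _
  calc secDist B m' s t ≤ ∫ x, Sᶜ.indicator (fun _ => (1 : ℝ)) x ∂m' :=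
        integral_mono_of_nonneg hnonneg ((integrable_const 1).indicator hS.compl) hle
    _ = m'.real Sᶜ := by simp [integral_indicator_const (1 : ℝ) hS.compl]

section TensorBundle

variable {B₁ B₂ : MBB X μ} (B : MBB X μ)

lemma tensSec_val_of_mem (s₁ : Sec B₁) (s₂ : Sec B₂) {x : X} {n m : ℕ}
    (h₁ : x ∈ B₁.E n) (h₂ : x ∈ B₂.E m) (p : Fin (n * m)) :
    (tensSec B₁ B₂ B s₁ s₂).val (n * m) x p =
      s₁.val n x (finProdFinEquiv.symm p).1 * s₂.val m x (finProdFinEquiv.symm p).2 := by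
  have hn : n ∈ Finset.range (n * m + 1) :=
    Finset.mem_range_succ_iff.2 (Nat.le_mul_of_pos_right n (Nat.pos_of_mul_pos_left p.pos))
  have hm : m ∈ Finset.range (n * m + 1) :=
    Finset.mem_range_succ_iff.2 (Nat.le_mul_of_pos_left m (Nat.pos_of_mul_pos_right p.pos))
  change ∑ n' ∈ Finset.range (n * m + 1), ∑ m' ∈ Finset.range (n * m + 1), _ = _
  rw [Finset.sum_eq_single_of_mem n hn, Finset.sum_eq_single_of_mem m hm,
    dif_pos rfl, Set.indicator_of_mem (Set.mem_inter h₁ h₂)]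
  · rfl
  · intro m' _ hm'
    split_ifs
    · exact Set.indicator_of_notMem (fun hx => hm' (B₂.eq_of_mem_E hx.2 h₂)) _
    · rfl
  · intro n' _ hn'
    refine Finset.sum_eq_zero fun m' _ => ?_
    split_ifs
    · exact Set.indicator_of_notMem (fun hx => hn' (B₁.eq_of_mem_E hx.1 h₁)) _
    · rfl

variable {B}

theorem ae_ptNorm_tensSec (hE : ∀ n m, B₁.E n ∩ B₂.E m ⊆ B.E (n * m))
    (hnrm : ∀ n m : ℕ, ∀ᵐ x ∂μ, x ∈ B₁.E n ∩ B₂.E m →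
      ∀ (v : Fin n → ℝ) (w : Fin m → ℝ),
        B.nrm (n * m) x
            (fun p => v (finProdFinEquiv.symm p).1 * w (finProdFinEquiv.symm p).2) =
          B₁.nrm n x v * B₂.nrm m x w)
    (s₁ : Sec B₁) (s₂ : Sec B₂) :
    (fun x => ptNorm B (tensSec B₁ B₂ B s₁ s₂) x) =ᵐ[μ]
      fun x => ptNorm B₁ s₁ x * ptNorm B₂ s₂ x := by
  filter_upwards [ae_all_iff.2 fun n => ae_all_iff.2 (hnrm n)] with x hx
  obtain ⟨n, hn⟩ := B₁.exists_mem_E x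
  obtain ⟨m, hm⟩ := B₂.exists_mem_E x
  rw [ptNorm_eq_nrm_of_mem B _ (hE n m ⟨hn, hm⟩), ptNorm_eq_nrm_of_mem B₁ s₁ hn,
    ptNorm_eq_nrm_of_mem B₂ s₂ hm, ← hx n m ⟨hn, hm⟩]
  exact congrArg _ (funext (tensSec_val_of_mem B s₁ s₂ hn hm))

end TensorBundle

section Density

variable {B₁ B₂ : MBB X μ}

def dimLTSet (B₁ B₂ : MBB X μ) (N : ℕ) : Set X := ⋃ n < N, ⋃ m < N, B₁.E n ∩ B₂.E m

lemma measurableSet_dimLTSet (N : ℕ) : MeasurableSet (dimLTSet B₁ B₂ N) :=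
  .biUnion (Set.to_countable _) fun n _ =>
    .biUnion (Set.to_countable _) fun m _ => (B₁.measE n).inter (B₂.measE m)

lemma monotone_dimLTSet : Monotone (dimLTSet B₁ B₂) := fun _ _ hNM =>
  Set.biUnion_mono (fun _ hn => lt_of_lt_of_le hn hNM) fun _ _ =>
    Set.biUnion_mono (fun _ hm => lt_of_lt_of_le hm hNM) fun _ _ => subset_rfl

lemma iUnion_dimLTSet : ⋃ N, dimLTSet B₁ B₂ N = Set.univ := by
  refine Set.eq_univ_of_forall fun x => ?_
  obtain ⟨n, hn⟩ := B₁.exists_mem_E x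
  obtain ⟨m, hm⟩ := B₂.exists_mem_E x
  simp only [dimLTSet, Set.mem_iUnion]
  exact ⟨max n m + 1, n, by omega, m, by omega, hn, hm⟩

lemma tendsto_measure_compl_dimLTSet (ν : Measure X) [IsFiniteMeasure ν] :
    Tendsto (fun N => ν (dimLTSet B₁ B₂ N)ᶜ) atTop (𝓝 0) := by
  have h := tendsto_measure_iInter_atTop (μ := ν) (s := fun N => (dimLTSet B₁ B₂ N)ᶜ)
    (fun N => (measurableSet_dimLTSet N).compl.nullMeasurableSet)
    (fun _ _ hNM => Set.compl_subset_compl.2 (monotone_dimLTSet hNM)) ⟨0, measure_ne_top ν _⟩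
  rwa [← Set.compl_iUnion, iUnion_dimLTSet, Set.compl_univ, measure_empty] at h

def basisSec (B : MBB X μ) (n : ℕ) (i : Fin n) : Sec B := constSec B n (Pi.single i 1)

lemma basisSec_val_self (B : MBB X μ) {n : ℕ} (i : Fin n) (x : X) :
    (basisSec B n i).val n x = Pi.single i 1 := by
  simp [basisSec, constSec]

-- `⟨(n, m), (i, j)⟩` indexes the frame element `eᵢ ⊗ eⱼ` over `E¹ₙ ∩ E²ₘ`.
abbrev FrameIdx (N : ℕ) : Type := Σ q : Fin N × Fin N, Fin q.1 × Fin q.2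

variable {B : MBB X μ}

noncomputable def frameCoeff (B₁ B₂ : MBB X μ) (t : Sec B) {N : ℕ} (a : FrameIdx N) : X → ℝ :=
  (B₁.E a.1.1 ∩ B₂.E a.1.2).indicator fun y => t.val (a.1.1 * a.1.2) y (finProdFinEquiv a.2)

lemma measurable_frameCoeff (t : Sec B) {N : ℕ} (a : FrameIdx N) :
    Measurable (frameCoeff B₁ B₂ t a) :=
  ((measurable_pi_apply _).comp (t.meas _)).indicator ((B₁.measE _).inter (B₂.measE _))

lemma sum_frameCoeff_mul_tensSec_basisSec (t : Sec B) {N n m : ℕ} (hn : n < N) (hm : m < N)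
    {x : X} (h₁ : x ∈ B₁.E n) (h₂ : x ∈ B₂.E m) (p : Fin (n * m)) :
    ∑ a : FrameIdx N, frameCoeff B₁ B₂ t a x *
        (tensSec B₁ B₂ B (basisSec B₁ a.1.1 a.2.1) (basisSec B₂ a.1.2 a.2.2)).val (n * m) x p =
      t.val (n * m) x p := by
  rw [Fintype.sum_sigma, Fintype.sum_eq_single (⟨n, hn⟩, ⟨m, hm⟩)]
  · obtain ⟨⟨u, v⟩, rfl⟩ := finProdFinEquiv.surjective p
    change ∑ ij : Fin n × Fin m, frameCoeff B₁ B₂ t ⟨(⟨n, hn⟩, ⟨m, hm⟩), ij⟩ x *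
      (tensSec B₁ B₂ B (basisSec B₁ n ij.1) (basisSec B₂ m ij.2)).val (n * m) x
        (finProdFinEquiv (u, v)) = _
    simp only [tensSec_val_of_mem B _ _ h₁ h₂, Equiv.symm_apply_apply, basisSec_val_self,
      frameCoeff, Set.indicator_of_mem (Set.mem_inter h₁ h₂)]
    rw [Fintype.sum_eq_single (u, v) fun ij hij => ?_]
    · simp
    · obtain ⟨i, j⟩ := ij
      have hne : u ≠ i ∨ v ≠ j := by
        by_contra! h
        exact hij (by rw [h.1, h.2])
      rcases hne with hu | hv
      · rw [Pi.single_apply, if_neg hu, zero_mul, mul_zero]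
      · rw [Pi.single_apply j, if_neg hv, mul_zero, mul_zero]
  · intro q hq
    refine Finset.sum_eq_zero fun ij _ => ?_
    have hx : x ∉ B₁.E q.1 ∩ B₂.E q.2 := fun hx =>
      hq (Prod.ext (Fin.ext (B₁.eq_of_mem_E hx.1 h₁)) (Fin.ext (B₂.eq_of_mem_E hx.2 h₂)))
    rw [frameCoeff, Set.indicator_of_notMem hx, zero_mul]

theorem exists_lincomb_tensSec_secDist_lt (hE : ∀ n m, B₁.E n ∩ B₂.E m ⊆ B.E (n * m))
    {m' : Measure X} [IsFiniteMeasure m'] (hm' : m' ≪ μ) (t : Sec B) {ε : ℝ} (hε : 0 < ε) :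
    ∃ (k : ℕ) (g : Fin k → X → ℝ) (hg : ∀ i, Measurable (g i))
      (s₁ : Fin k → Sec B₁) (s₂ : Fin k → Sec B₂),
      secDist B m' t (lincomb g hg fun i => tensSec B₁ B₂ B (s₁ i) (s₂ i)) < ε := by
  obtain ⟨N, hN⟩ :=
    ((tendsto_measure_compl_dimLTSet m').eventually_lt_const (ENNReal.ofReal_pos.2 hε)).exists
  let e := (Fintype.equivFin (FrameIdx N)).symm
  refine ⟨_, fun i => frameCoeff B₁ B₂ t (e i), fun i => measurable_frameCoeff t (e i),
    fun i => basisSec B₁ _ (e i).2.1, fun i => basisSec B₂ _ (e i).2.2,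
    (secDist_le_measureReal_compl B hm' _ _ (measurableSet_dimLTSet N) (ae_of_all _ ?_)).trans_lt
      (ENNReal.toReal_lt_of_lt_ofReal hN)⟩
  intro x hx k hk
  simp only [dimLTSet, Set.mem_iUnion] at hx
  obtain ⟨n, hn, m, hm, h₁, h₂⟩ := hx
  obtain rfl := B.eq_of_mem_E (hE n m ⟨h₁, h₂⟩) hk
  funext p
  exact (sum_frameCoeff_mul_tensSec_basisSec t hn hm h₁ h₂ p).symm.trans
    (Equiv.sum_comp e fun a => frameCoeff B₁ B₂ t a x *
      (tensSec B₁ B₂ B (basisSec B₁ a.1.1 a.2.1) (basisSec B₂ a.1.2 a.2.2)).val (n * m) x p).symm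

end Density

theorem tensor_product_of_hilbert_sections_general
    {X : Type*} [MeasurableSpace X] (μ : Measure X)
    (m' : Measure X) [IsProbabilityMeasure m'] (h₂ : m' ≪ μ)
    (B₁ B₂ B : MBB X μ)
    (hE : ∀ k, B.E k = ⋃ (p : ℕ × ℕ) (_ : p.1 * p.2 = k), B₁.E p.1 ∩ B₂.E p.2)
    (hnrm : ∀ n m : ℕ, ∀ᵐ x ∂μ, x ∈ B₁.E n ∩ B₂.E m →
      ∀ (v : Fin n → ℝ) (w : Fin m → ℝ),
        B.nrm (n * m) x
            (fun p => v (finProdFinEquiv.symm p).1 * w (finProdFinEquiv.symm p).2) =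
          B₁.nrm n x v * B₂.nrm m x w) :
    -- the elementary tensor map is a pointwise isometry: `|s¹ ⊗ s²| = |s¹||s²|` m-a.e.
    (∀ (s₁ : Sec B₁) (s₂ : Sec B₂),
      (fun x => ptNorm B (tensSec B₁ B₂ B s₁ s₂) x) =ᵐ[μ]
        fun x => ptNorm B₁ s₁ x * ptNorm B₂ s₂ x) ∧
    -- the `L⁰(m)`-linear span of the elementary tensors is dense in `Γ(T₁ ⊗ T₂)`
    (∀ (t : Sec B) (ε : ℝ), 0 < ε →
      ∃ (k : ℕ) (g : Fin k → X → ℝ) (hg : ∀ i, Measurable (g i))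
        (s₁ : Fin k → Sec B₁) (s₂ : Fin k → Sec B₂),
        secDist B m' t (lincomb g hg fun i => tensSec B₁ B₂ B (s₁ i) (s₂ i)) < ε) := by
  have hE' : ∀ n m, B₁.E n ∩ B₂.E m ⊆ B.E (n * m) := fun n m x hx => by
    rw [hE]
    exact Set.mem_iUnion₂.2 ⟨(n, m), rfl, hx⟩
  exact ⟨ae_ptNorm_tensSec hE' hnrm, fun t _ hε => exists_lincomb_tensSec_secDist_lt hE' h₂ t hε⟩

/-- **Tensor products of Hilbert section modules.** Let `T₁`, `T₂` be measurable Hilbert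
bundles over a metric measure space `(X,d,m)` (fiber norms satisfying the parallelogram
identity a.e.), and let `T = T₁ ⊗ T₂` be the tensor-product bundle: its partition is
`E_k = ⋃_{nm=k} E¹_n ∩ E²_m` (which is thus the dimensional decomposition of
`Γ(T₁) ⊗ Γ(T₂)`), its fibers are Hilbertian, and its norm factorizes on elementary
tensors. Then `Γ(T₁) ⊗ Γ(T₂) = Γ(T₁ ⊗ T₂)`: the elementary tensor map is a pointwise
isometry, `|s¹ ⊗ s²| = |s¹| |s²|` m-a.e., and the `L⁰(m)`-linear span of elementary
tensors is dense in `Γ(T₁ ⊗ T₂)`. -/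
theorem tensor_product_of_hilbert_sections
    {X : Type*} [MetricSpace X] [CompleteSpace X] [SecondCountableTopology X]
    [MeasurableSpace X] [BorelSpace X]
    (μ : Measure X) [IsLocallyFiniteMeasure μ] (hμ : μ ≠ 0)
    (m' : Measure X) [IsProbabilityMeasure m'] (h₁ : μ ≪ m') (h₂ : m' ≪ μ)
    (B₁ B₂ B : MBB X μ)
    (hHilb₁ : ∀ n, ∀ᵐ x ∂μ, x ∈ B₁.E n → ∀ v w : Fin n → ℝ,
      B₁.nrm n x (v + w) ^ 2 + B₁.nrm n x (v - w) ^ 2 =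
        2 * B₁.nrm n x v ^ 2 + 2 * B₁.nrm n x w ^ 2)
    (hHilb₂ : ∀ n, ∀ᵐ x ∂μ, x ∈ B₂.E n → ∀ v w : Fin n → ℝ,
      B₂.nrm n x (v + w) ^ 2 + B₂.nrm n x (v - w) ^ 2 =
        2 * B₂.nrm n x v ^ 2 + 2 * B₂.nrm n x w ^ 2)
    (hHilb : ∀ n, ∀ᵐ x ∂μ, x ∈ B.E n → ∀ v w : Fin n → ℝ,
      B.nrm n x (v + w) ^ 2 + B.nrm n x (v - w) ^ 2 =
        2 * B.nrm n x v ^ 2 + 2 * B.nrm n x w ^ 2)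
    (hE : ∀ k, B.E k = ⋃ (p : ℕ × ℕ) (_ : p.1 * p.2 = k), B₁.E p.1 ∩ B₂.E p.2)
    (hnrm : ∀ n m : ℕ, ∀ᵐ x ∂μ, x ∈ B₁.E n ∩ B₂.E m →
      ∀ (v : Fin n → ℝ) (w : Fin m → ℝ),
        B.nrm (n * m) x
            (fun p => v (finProdFinEquiv.symm p).1 * w (finProdFinEquiv.symm p).2) =
          B₁.nrm n x v * B₂.nrm m x w) :
    -- the elementary tensor map is a pointwise isometry: `|s¹ ⊗ s²| = |s¹||s²|` m-a.e.
    (∀ (s₁ : Sec B₁) (s₂ : Sec B₂),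
      (fun x => ptNorm B (tensSec B₁ B₂ B s₁ s₂) x) =ᵐ[μ]
        fun x => ptNorm B₁ s₁ x * ptNorm B₂ s₂ x) ∧
    -- the `L⁰(m)`-linear span of the elementary tensors is dense in `Γ(T₁ ⊗ T₂)`
    (∀ (t : Sec B) (ε : ℝ), 0 < ε →
      ∃ (k : ℕ) (g : Fin k → X → ℝ) (hg : ∀ i, Measurable (g i))
        (s₁ : Fin k → Sec B₁) (s₂ : Fin k → Sec B₂),
        secDist B m' t (lincomb g hg fun i => tensSec B₁ B₂ B (s₁ i) (s₂ i)) < ε) :=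
  tensor_product_of_hilbert_sections_general μ m' h₂ B₁ B₂ B hE hnrm

end L0SerreSwan
end
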